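/- Let l ≥ 1 be an integer, a ∈ ℝ, and let J be the l×l Jordan cell matrix with a on the diagonal and 1 on the superdiagonal. Then for every t > 0, the operator norm of t^J := exp((log t)·J) induced by the maximum norm ‖x‖_∞ = max_{1≤i≤l}|x_i| on ℝ^l equals t^a · Σ_{j=0}^{l−1} |log t|^j / j!. -/

import Mathlib

open MeasureTheory ProbabilityTheory Filter Matrix Real

noncomputable section

/-- `t ^ A := exp((log t) • A)` for a real square matrix `A` and `t > 0`. -/
def matPow {d : ℕ} (t : ℝ) (A : Matrix (Fin d) (Fin d) ℝ) : Matrix (Fin d) (Fin d) ℝ :=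
  NormedSpace.exp (Real.log t • A)

/-- The `l × l` Jordan cell matrix with `a` on the diagonal and `1` on the superdiagonal. -/
def jordanCell (l : ℕ) (a : ℝ) : Matrix (Fin l) (Fin l) ℝ :=
  Matrix.of fun i j => if (i : ℕ) = (j : ℕ) then a else if (j : ℕ) = (i : ℕ) + 1 then 1 else 0

/-- The operator norm of a matrix induced by the maximum norm
`‖x‖_∞ = max_i |x i|` on `ℝ^l` (the sup norm is the norm of the standard
`Pi` normed space structure on `Fin l → ℝ`). -/
def supOpNorm {l : ℕ} (A : Matrix (Fin l) (Fin l) ℝ) : ℝ :=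
  ‖LinearMap.toContinuousLinearMap (Matrix.mulVecLin A)‖

/-! Write `J = a • 1 + N` with `N` the nilpotent shift. The two summands commute, so
`t ^ J = t ^ a • exp (log t • N)`, and the exponential series of `log t • N` stops after `l` terms:
its `(i, j)` entry is `(log t) ^ (j - i) / (j - i)!` for `i ≤ j` and `0` otherwise. The operator
norm for the maximum norm is the largest absolute row sum, and the first row, which contains
every power `|log t| ^ k / k!` with `k < l`, dominates all others. -/

lemma jordanCell_eq_smul_one_add (l : ℕ) (a : ℝ) :
    jordanCell l a = a • (1 : Matrix (Fin l) (Fin l) ℝ) + jordanCell l 0 := by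
  ext i j
  rcases eq_or_ne i j with rfl | hij
  · simp [jordanCell]
  · simp [jordanCell, one_apply_ne hij, Fin.val_ne_of_ne hij]

lemma jordanCell_zero_apply (l : ℕ) (i j : Fin l) :
    jordanCell l 0 i j = if (j : ℕ) = i + 1 then 1 else 0 := by
  simp only [jordanCell, of_apply]
  split_ifs <;> first | rfl | omega

lemma jordanCell_zero_pow_apply (l k : ℕ) (i j : Fin l) :
    (jordanCell l 0 ^ k) i j = if (j : ℕ) = i + k then 1 else 0 := by
  induction k generalizing j with
  | zero => simp [one_apply, Fin.ext_iff, eq_comm]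
  | succ k ih =>
    simp only [pow_succ, mul_apply, ih, jordanCell_zero_apply, ite_mul, one_mul, zero_mul]
    by_cases h : (i : ℕ) + k < l
    · rw [Finset.sum_eq_single ⟨i + k, h⟩ fun m _ hm => if_neg fun hc => hm (Fin.ext hc)]
      · simp [add_assoc]
      · simp
    · rw [Finset.sum_eq_zero fun m _ => if_neg (by omega), if_neg (by omega)]

lemma jordanCell_zero_pow_eq_zero {l n : ℕ} (hn : l ≤ n) : jordanCell l 0 ^ n = 0 := by
  ext i j
  rw [jordanCell_zero_pow_apply, Matrix.zero_apply, if_neg (by omega)]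

lemma NormedSpace.exp_eq_sum_range_of_pow_eq_zero (𝕂 : Type*) {𝔸 : Type*} [Field 𝕂]
    [CharZero 𝕂] [Ring 𝔸] [Algebra 𝕂 𝔸] [TopologicalSpace 𝔸] [IsTopologicalRing 𝔸] {x : 𝔸} {k : ℕ}
    (hx : x ^ k = 0) :
    NormedSpace.exp x = ∑ n ∈ Finset.range k, (n.factorial⁻¹ : 𝕂) • x ^ n := by
  rw [NormedSpace.exp_eq_tsum 𝕂]
  refine tsum_eq_sum fun n hn => ?_
  rw [pow_eq_zero_of_le (by simpa using hn) hx, smul_zero]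

lemma Matrix.exp_smul_one {m : Type*} [Fintype m] [DecidableEq m] (c : ℝ) :
    NormedSpace.exp (c • (1 : Matrix m m ℝ)) = Real.exp c • 1 := by
  rw [smul_one_eq_diagonal, smul_one_eq_diagonal, exp_diagonal, Pi.exp_def, Real.exp_eq_exp_ℝ]

lemma exp_smul_jordanCell_zero_apply (l : ℕ) (c : ℝ) (i j : Fin l) :
    NormedSpace.exp (c • jordanCell l 0) i j =
      if (i : ℕ) ≤ j then c ^ ((j : ℕ) - i) / ((j : ℕ) - i).factorial else 0 := by
  have hnil : (c • jordanCell l 0) ^ l = 0 := by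
    rw [smul_pow, jordanCell_zero_pow_eq_zero le_rfl, smul_zero]
  rw [NormedSpace.exp_eq_sum_range_of_pow_eq_zero ℝ hnil, Matrix.sum_apply]
  simp only [smul_pow, Matrix.smul_apply, jordanCell_zero_pow_apply, smul_eq_mul, mul_ite, mul_one,
    mul_zero]
  split_ifs with hij
  · rw [Finset.sum_eq_single ((j : ℕ) - i) (fun n _ hn => if_neg (by omega))
      fun h => absurd (Finset.mem_range.2 (by omega)) h, if_pos (by omega), div_eq_inv_mul]
  · exact Finset.sum_eq_zero fun n _ => if_neg (by omega)

lemma matPow_jordanCell {t : ℝ} (ht : 0 < t) (l : ℕ) (a : ℝ) :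
    matPow t (jordanCell l a) = t ^ a • NormedSpace.exp (Real.log t • jordanCell l 0) := by
  have hcomm : Commute ((Real.log t * a) • (1 : Matrix (Fin l) (Fin l) ℝ))
      (Real.log t • jordanCell l 0) :=
    (Commute.one_left _).smul_left _ |>.smul_right _
  rw [matPow, jordanCell_eq_smul_one_add, smul_add, smul_smul, exp_add_of_commute _ _ hcomm,
    Matrix.exp_smul_one, smul_mul, one_mul, rpow_def_of_pos ht]

lemma matPow_jordanCell_apply {t : ℝ} (ht : 0 < t) (l : ℕ) (a : ℝ) (i j : Fin l) :
    matPow t (jordanCell l a) i j = t ^ a *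
      if (i : ℕ) ≤ j then Real.log t ^ ((j : ℕ) - i) / ((j : ℕ) - i).factorial else 0 := by
  rw [matPow_jordanCell ht, Matrix.smul_apply, exp_smul_jordanCell_zero_apply, smul_eq_mul]

lemma sum_abs_matPow_jordanCell_apply {t : ℝ} (ht : 0 < t) (l : ℕ) (a : ℝ) (i : Fin l) :
    ∑ j, |matPow t (jordanCell l a) i j| =
      t ^ a * ∑ k ∈ Finset.range (l - i), |Real.log t| ^ k / k.factorial := by
  simp only [matPow_jordanCell_apply ht, abs_mul, abs_of_pos (rpow_pos_of_pos ht a),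
    ← Finset.mul_sum, apply_ite abs, abs_div, abs_pow, Nat.abs_cast, abs_zero]
  congr 1
  rw [Fin.sum_univ_eq_sum_range (fun j => if (i : ℕ) ≤ j then
      |Real.log t| ^ (j - i) / (j - i).factorial else 0), ← Finset.sum_filter,
    Finset.range_eq_Ico, Finset.Ico_filter_le_of_left_le (Nat.zero_le _),
    Finset.sum_Ico_eq_sum_range]
  simp

lemma supOpNorm_eq_sum_abs_of_forall_le {l : ℕ} (A : Matrix (Fin l) (Fin l) ℝ) (i₀ : Fin l)
    (h : ∀ i, ∑ j, |A i j| ≤ ∑ j, |A i₀ j|) : supOpNorm A = ∑ j, |A i₀ j| := by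
  let : NormedAddCommGroup (Matrix (Fin l) (Fin l) ℝ) := Matrix.linftyOpNormedAddCommGroup
  have hsup : (Finset.univ.sup fun i => ∑ j, ‖A i j‖₊) = ∑ j, ‖A i₀ j‖₊ := by
    refine le_antisymm (Finset.sup_le fun i _ => ?_)
      (Finset.le_sup (f := fun i => ∑ j, ‖A i j‖₊) (Finset.mem_univ i₀))
    simpa [← NNReal.coe_le_coe] using h i
  have hnorm : supOpNorm A = ‖A‖ := (linfty_opNorm_eq_opNorm A).symm
  simp [hnorm, linfty_opNorm_def, hsup]

theorem supOpNorm_matPow_jordanCell_general (l : ℕ) (a : ℝ) (t : ℝ) (ht : 0 < t) :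
    supOpNorm (matPow t (jordanCell l a)) =
      t ^ a * ∑ j ∈ Finset.range l, |Real.log t| ^ j / (Nat.factorial j : ℝ) := by
  rcases l with _ | l
  · simp [supOpNorm]
  · rw [supOpNorm_eq_sum_abs_of_forall_le _ 0 fun i => ?_, sum_abs_matPow_jordanCell_apply ht]
    · simp
    · rw [sum_abs_matPow_jordanCell_apply ht, sum_abs_matPow_jordanCell_apply ht]
      gcongr
      positivity

/-- For the Jordan cell `J` of size `l ≥ 1` with eigenvalue `a` and any `t > 0`, the
operator norm of `t^J` induced by the maximum norm equals
`t^a * ∑_{j=0}^{l-1} |log t|^j / j!`. -/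
theorem supOpNorm_matPow_jordanCell (l : ℕ) (hl : 1 ≤ l) (a : ℝ) (t : ℝ) (ht : 0 < t) :
    supOpNorm (matPow t (jordanCell l a)) =
      t ^ a * ∑ j ∈ Finset.range l, |Real.log t| ^ j / (Nat.factorial j : ℝ) :=
  supOpNorm_matPow_jordanCell_general l a t ht
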